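/- arXiv:2108.11545 — 13 statements merged into one kernel-verified Lean document; each statement's English description precedes it below -/
import Mathlib

section
/- Proposition 1 (sufficiency). Let ρ, ρ̄ ∈ ℝ, μα, μ̄α ∈ ℝ^N and μγ, μ̄γ ∈ ℝ^M satisfy the moment equality (J + ρ·G).mulVec μα + D.mulVec μγ = (J + ρ̄·G).mulVec μ̄α + D.mulVec μ̄γ. Suppose there exist no vectors v₁, v₂ ∈ ℝ^N with (W*J).mulVec v₁ + (W*G).mulVec v₂ = 0 and no scalars δ₁, δ₂ ∈ ℝ with δ₂ ≠ 0 such that δ₁ • v₁ + δ₂ • v₂ = μα. Then ρ̄ = ρ. -/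
open Matrix

/-- Proposition 1 (sufficiency): identification of the peer effect ρ from the
conditional mean restriction in the panel peer-effects model
E[y] = (J + ρG)μα + Dμγ, where W = 1 - D(DᵀD)⁻¹Dᵀ annihilates the group dummies. -/
theorem proposition1_sufficiency
    (n N M : ℕ) (hn : 0 < n) (hN : 0 < N) (hM : 0 < M)
    (J G : Matrix (Fin n) (Fin N) ℝ) (D : Matrix (Fin n) (Fin M) ℝ)
    (hDD : IsUnit (Dᵀ * D))
    (W : Matrix (Fin n) (Fin n) ℝ)
    (hW : W = 1 - D * (Dᵀ * D)⁻¹ * Dᵀ)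
    (ρ ρ' : ℝ) (μα μα' : Fin N → ℝ) (μγ μγ' : Fin M → ℝ)
    (hmom : (J + ρ • G).mulVec μα + D.mulVec μγ
          = (J + ρ' • G).mulVec μα' + D.mulVec μγ')
    (hid : ¬ ∃ (v₁ v₂ : Fin N → ℝ) (δ₁ δ₂ : ℝ),
      (W * J).mulVec v₁ + (W * G).mulVec v₂ = 0 ∧ δ₂ ≠ 0 ∧ δ₁ • v₁ + δ₂ • v₂ = μα) :
    ρ' = ρ := by
  by_contra hne
  have hdet : IsUnit (Dᵀ * D).det := (Matrix.isUnit_iff_isUnit_det _).1 hDD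
  have hWD : W * D = 0 := by
    rw [hW, Matrix.sub_mul, Matrix.one_mul, Matrix.mul_assoc, Matrix.mul_assoc,
      Matrix.nonsing_inv_mul _ hdet, Matrix.mul_one, sub_self]
  -- apply W to the moment equation
  have key : (W * J).mulVec (μα - μα') + (W * G).mulVec (ρ • μα - ρ' • μα') = 0 := by
    have h := congrArg (W.mulVec) hmom
    simp only [Matrix.mulVec_add, Matrix.add_mulVec, Matrix.smul_mulVec,
      Matrix.mulVec_smul, Matrix.mulVec_mulVec, hWD, Matrix.zero_mulVec, add_zero] at h
    simp only [Matrix.mulVec_sub, Matrix.mulVec_smul]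
    rw [sub_add_sub_comm, sub_eq_zero]
    exact h
  apply hid
  refine ⟨μα - μα', ρ • μα - ρ' • μα', -ρ' / (ρ - ρ'), 1 / (ρ - ρ'), key, ?_, ?_⟩
  · have : ρ - ρ' ≠ 0 := sub_ne_zero.mpr (fun h => hne h.symm)
    simp [this]
  · have hρ : ρ - ρ' ≠ 0 := sub_ne_zero.mpr (fun h => hne h.symm)
    funext i
    simp only [Pi.add_apply, Pi.smul_apply, Pi.sub_apply, smul_eq_mul]
    field_simp
    ring
end

section
/- Corollary 1 (linear-in-means type networks). Assume J.mulVec 1 = 1 and G.mulVec 1 = 1 (all row sums of J and of G equal one), that Dᵀ*D is invertible, and that the rank of the concatenated n×(2N+M) matrix [J, G, D] equals 2N + M − 1. Let ρ, ρ̄ ∈ ℝ, μα, μ̄α ∈ ℝ^N and μγ, μ̄γ ∈ ℝ^M satisfy (J + ρ·G).mulVec μα + D.mulVec μγ = (J + ρ̄·G).mulVec μ̄α + D.mulVec μ̄γ. If there exist indices i, j with μα i ≠ μα j, then ρ̄ = ρ. -/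
/-!
Write `A = [J, G, D]`. Because the rows of `J` and `G` sum to one, `(1, -1, 0)` lies in the kernel
of `A`, and the rank condition says by rank–nullity that this kernel is a line. The moment
equation says that `(μα - μα', ρ μα - ρ' μα', μγ - μγ')` lies in the same kernel, hence equals
`c (1, -1, 0)`. Eliminating `μα'` gives `(ρ - ρ') μα = -(1 + ρ') c`, a constant vector, which
forces `ρ' = ρ` as soon as `μα` is not constant.
-/

open Matrix

namespace Matrix

variable {m n p K : Type*} [Fintype n]

theorem exists_smul_eq_of_rank_eq_card_sub_one [Field K] {A : Matrix m n K}
    (hA : A.rank = Fintype.card n - 1) {v w : n → K} (hv0 : v ≠ 0) (hv : A *ᵥ v = 0)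
    (hw : A *ᵥ w = 0) : ∃ c : K, c • v = w := by
  have hker : Module.finrank K (LinearMap.ker A.mulVecLin) = 1 := by
    have := LinearMap.finrank_range_add_finrank_ker A.mulVecLin
    have hpos : 0 < Fintype.card n := Fintype.card_pos_iff.mpr ⟨(Function.ne_iff.mp hv0).choose⟩
    rw [Module.finrank_fintype_fun_eq_card] at this
    change A.rank + _ = _ at this
    omega
  obtain ⟨c, hc⟩ := (finrank_eq_one_iff_of_nonzero' (⟨v, hv⟩ : LinearMap.ker A.mulVecLin)
    (fun h => hv0 (congrArg Subtype.val h))).mp hker ⟨w, hw⟩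
  exact ⟨c, congrArg Subtype.val hc⟩

variable [Fintype p] [CommRing K]

theorem fromCols_mulVec_sumElim_one_neg_one {J G : Matrix m n K} (D : Matrix m p K)
    (h : J *ᵥ 1 = G *ᵥ 1) : fromCols J (fromCols G D) *ᵥ Sum.elim 1 (Sum.elim (-1) 0) = 0 := by
  simp [h, mulVec_neg]

theorem fromCols_mulVec_sumElim_sub {J G : Matrix m n K} {D : Matrix m p K} {ρ ρ' : K}
    {a a' : n → K} {b b' : p → K} (h : (J + ρ • G) *ᵥ a + D *ᵥ b = (J + ρ' • G) *ᵥ a' + D *ᵥ b') :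
    fromCols J (fromCols G D) *ᵥ Sum.elim (a - a') (Sum.elim (ρ • a - ρ' • a') (b - b')) = 0 := by
  simp only [fromCols_mulVec_sumElim, mulVec_sub, mulVec_smul]
  simp only [add_mulVec, smul_mulVec] at h
  linear_combination h

end Matrix

theorem corollary1_linear_in_means_general
    (n N M : ℕ)
    (J G : Matrix (Fin n) (Fin N) ℝ) (D : Matrix (Fin n) (Fin M) ℝ)
    (hJ1 : J.mulVec 1 = 1) (hG1 : G.mulVec 1 = 1)
    (hrank : (Matrix.fromCols J (Matrix.fromCols G D)).rank = 2 * N + M - 1)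
    (ρ ρ' : ℝ) (μα μα' : Fin N → ℝ) (μγ μγ' : Fin M → ℝ)
    (hmom : (J + ρ • G).mulVec μα + D.mulVec μγ
          = (J + ρ' • G).mulVec μα' + D.mulVec μγ')
    (hhet : ∃ i j : Fin N, μα i ≠ μα j) :
    ρ' = ρ := by
  obtain ⟨i, j, hij⟩ := hhet
  have hv0 : (Sum.elim 1 (Sum.elim (-1) 0) : Fin N ⊕ (Fin N ⊕ Fin M) → ℝ) ≠ 0 :=
    Function.ne_iff.mpr ⟨Sum.inl i, by simp⟩
  obtain ⟨c, hc⟩ := exists_smul_eq_of_rank_eq_card_sub_one (by simpa [two_mul, add_assoc] using hrank)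
    hv0 (fromCols_mulVec_sumElim_one_neg_one D (hJ1.trans hG1.symm))
    (fromCols_mulVec_sumElim_sub hmom)
  have hα (k : Fin N) : c = μα k - μα' k := by simpa using congrFun hc (Sum.inl k)
  have hρα (k : Fin N) : -c = ρ * μα k - ρ' * μα' k := by
    simpa using congrFun hc (Sum.inr (Sum.inl k))
  have hprod : (ρ - ρ') * (μα i - μα j) = 0 := by
    linear_combination (hρα j - hρα i) + ρ' * (hα i - hα j)
  rcases mul_eq_zero.mp hprod with h | h
  · linarith
  · exact absurd (sub_eq_zero.mp h) hij

/-- Corollary 1 (linear-in-means type networks): if the rows of J and G sum to one and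
the stacked matrix [J, G, D] has rank 2N + M − 1, then ρ is identified provided the mean
individual heterogeneity μα is not constant across individuals. -/
theorem corollary1_linear_in_means
    (n N M : ℕ) (hn : 0 < n) (hN : 0 < N) (hM : 0 < M)
    (J G : Matrix (Fin n) (Fin N) ℝ) (D : Matrix (Fin n) (Fin M) ℝ)
    (hJ1 : J.mulVec 1 = 1) (hG1 : G.mulVec 1 = 1)
    (hDD : IsUnit (Dᵀ * D))
    (hrank : (Matrix.fromCols J (Matrix.fromCols G D)).rank = 2 * N + M - 1)
    (ρ ρ' : ℝ) (μα μα' : Fin N → ℝ) (μγ μγ' : Fin M → ℝ)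
    (hmom : (J + ρ • G).mulVec μα + D.mulVec μγ
          = (J + ρ' • G).mulVec μα' + D.mulVec μγ')
    (hhet : ∃ i j : Fin N, μα i ≠ μα j) :
    ρ' = ρ :=
  corollary1_linear_in_means_general n N M J G D hJ1 hG1 hrank ρ ρ' μα μα' μγ μγ' hmom hhet
end

section
/- Null-space structure underlying Corollary 1. Assume J.mulVec 1 = 1 and G.mulVec 1 = 1, that Dᵀ*D is invertible, and that rank of the n×(2N+M) matrix [J, G, D] equals 2N + M − 1. Then every pair of vectors v₁, v₂ ∈ ℝ^N with (W*J).mulVec v₁ + (W*G).mulVec v₂ = 0 satisfies v₁ = c • 1 and v₂ = −c • 1 for some scalar c ∈ ℝ; that is, the null space of the map (v₁,v₂) ↦ WJv₁ + WGv₂ is spanned by (1, −1). -/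
/-!
Write `W = 1 - D B` with `B = (DᵀD)⁻¹Dᵀ`. Then `W (J v₁ + G v₂) = 0` says `J v₁ + G v₂ = D w` with
`w = B (J v₁ + G v₂)`, so `(v₁, v₂, -w)` lies in the kernel of `[J, G, D]`. By rank–nullity that
kernel is a line, and it contains the nonzero vector `(1, -1, 0)` because `J` and `G` have unit
row sums.
-/

open Matrix

namespace Matrix

theorem eq_mulVec_mulVec_of_one_sub_mul_mulVec_eq_zero {n k R : Type*} [Ring R] [Fintype n]
    [Fintype k] [DecidableEq n] (D : Matrix n k R) (B : Matrix k n R) {x : n → R}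
    (hx : (1 - D * B) *ᵥ x = 0) : x = D *ᵥ (B *ᵥ x) := by
  rwa [sub_mulVec, one_mulVec, sub_eq_zero, ← mulVec_mulVec] at hx

theorem ker_mulVecLin_eq_span_singleton_of_rank_eq_card_sub_one {m ι K : Type*} [Field K]
    [Fintype ι] (A : Matrix m ι K)
    (hA : A.rank = Fintype.card ι - 1) {u : ι → K} (hu : A *ᵥ u = 0) (hu0 : u ≠ 0) :
    LinearMap.ker A.mulVecLin = K ∙ u := by
  have hrank_nullity := LinearMap.finrank_range_add_finrank_ker A.mulVecLin
  rw [Module.finrank_fintype_fun_eq_card] at hrank_nullity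
  have hker_pos : 0 < Module.finrank K (LinearMap.ker A.mulVecLin) :=
    Module.finrank_pos_iff_exists_ne_zero.mpr ⟨⟨u, hu⟩, fun h ↦ hu0 (congrArg Subtype.val h)⟩
  refine eq_span_singleton_of_mem_of_finrank_eq_one ?_ hu hu0
  change A.rank + _ = _ at hrank_nullity
  omega

end Matrix

theorem nullspace_structure_corollary1_general
    (n N M : ℕ) (hN : 0 < N)
    (J G : Matrix (Fin n) (Fin N) ℝ) (D : Matrix (Fin n) (Fin M) ℝ)
    (hJ1 : J.mulVec 1 = 1) (hG1 : G.mulVec 1 = 1)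
    (W : Matrix (Fin n) (Fin n) ℝ)
    (hW : W = 1 - D * (Dᵀ * D)⁻¹ * Dᵀ)
    (hrank : (Matrix.fromCols J (Matrix.fromCols G D)).rank = 2 * N + M - 1) :
    ∀ v₁ v₂ : Fin N → ℝ, (W * J).mulVec v₁ + (W * G).mulVec v₂ = 0 →
      ∃ c : ℝ, v₁ = c • (1 : Fin N → ℝ) ∧ v₂ = -c • (1 : Fin N → ℝ) := by
  intro v₁ v₂ hv
  set A := fromCols J (fromCols G D)
  set w := ((Dᵀ * D)⁻¹ * Dᵀ) *ᵥ (J *ᵥ v₁ + G *ᵥ v₂)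
  have hrange : J *ᵥ v₁ + G *ᵥ v₂ = D *ᵥ w := by
    refine eq_mulVec_mulVec_of_one_sub_mul_mulVec_eq_zero D _ ?_
    rwa [← Matrix.mul_assoc, ← hW, mulVec_add, mulVec_mulVec, mulVec_mulVec]
  set u : Fin N ⊕ Fin N ⊕ Fin M → ℝ := Sum.elim 1 (Sum.elim (-1) 0)
  have hker : LinearMap.ker A.mulVecLin = ℝ ∙ u := by
    refine A.ker_mulVecLin_eq_span_singleton_of_rank_eq_card_sub_one ?_ ?_ ?_
    · simp [hrank, two_mul, add_assoc]
    · simp [A, u, mulVec_neg, hJ1, hG1]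
    · exact fun h ↦ by simpa [u] using congrFun h (Sum.inl ⟨0, hN⟩)
  have hv_ker : Sum.elim v₁ (Sum.elim v₂ (-w)) ∈ LinearMap.ker A.mulVecLin := by
    rw [LinearMap.mem_ker, mulVecLin_apply, fromCols_mulVec_sumElim, fromCols_mulVec_sumElim,
      mulVec_neg, ← add_assoc, hrange, add_neg_cancel]
  rw [hker] at hv_ker
  obtain ⟨c, hc⟩ := Submodule.mem_span_singleton.mp hv_ker
  refine ⟨c, funext fun i ↦ ?_, funext fun i ↦ ?_⟩
  · simpa [u] using (congrFun hc (Sum.inl i)).symm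
  · simpa [u] using (congrFun hc (Sum.inr (Sum.inl i))).symm

/-- Null-space structure underlying Corollary 1: under the row-sum and rank conditions,
the null space of (v₁, v₂) ↦ WJv₁ + WGv₂ is spanned by (1, −1). -/
theorem nullspace_structure_corollary1
    (n N M : ℕ) (hn : 0 < n) (hN : 0 < N) (hM : 0 < M)
    (J G : Matrix (Fin n) (Fin N) ℝ) (D : Matrix (Fin n) (Fin M) ℝ)
    (hJ1 : J.mulVec 1 = 1) (hG1 : G.mulVec 1 = 1)
    (hDD : IsUnit (Dᵀ * D))
    (W : Matrix (Fin n) (Fin n) ℝ)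
    (hW : W = 1 - D * (Dᵀ * D)⁻¹ * Dᵀ)
    (hrank : (Matrix.fromCols J (Matrix.fromCols G D)).rank = 2 * N + M - 1) :
    ∀ v₁ v₂ : Fin N → ℝ, (W * J).mulVec v₁ + (W * G).mulVec v₂ = 0 →
      ∃ c : ℝ, v₁ = c • (1 : Fin N → ℝ) ∧ v₂ = -c • (1 : Fin N → ℝ) :=
  nullspace_structure_corollary1_general n N M hN J G D hJ1 hG1 W hW hrank
end

section
/- Rank decomposition under partialling out. Assume Dᵀ*D is invertible. Then the rank of the concatenated n×(2N+M) matrix [J, G, D] equals the rank of D plus the rank of the concatenated n×2N matrix [W*J, W*G]. -/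
open Matrix Module

/-!
`W` is a matrix with kernel the column space of `D`. That kernel lies in the column space `S` of
`[J, G, D]`, so rank–nullity for `W` restricted to `S` gives `dim S = rank D + dim W(S)`, and `W(S)`
is the column space of `[WJ, WG]` because `W` kills the columns of `D`.
-/

theorem Matrix.range_mulVecLin_fromCols {R m n₁ n₂ : Type*} [CommSemiring R]
    [Fintype n₁] [Fintype n₂] (A : Matrix m n₁ R) (B : Matrix m n₂ R) :
    LinearMap.range (fromCols A B).mulVecLin
      = LinearMap.range A.mulVecLin ⊔ LinearMap.range B.mulVecLin := by
  simp only [Matrix.range_mulVecLin, ← Submodule.span_union, ← Set.Sum.elim_range]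
  congr 2
  ext (i | i) <;> rfl

theorem Matrix.rank_fromCols_assoc {R m n₁ n₂ n₃ : Type*} [CommRing R]
    [Fintype n₁] [Fintype n₂] [Fintype n₃]
    (A : Matrix m n₁ R) (B : Matrix m n₂ R) (C : Matrix m n₃ R) :
    (fromCols A (fromCols B C)).rank = (fromCols (fromCols A B) C).rank := by
  rw [rank, rank, range_mulVecLin_fromCols, range_mulVecLin_fromCols, range_mulVecLin_fromCols,
    range_mulVecLin_fromCols, sup_assoc]

theorem Matrix.ker_mulVecLin_one_sub_mul_eq_range {R m p : Type*} [CommRing R]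
    [Fintype m] [DecidableEq m] [Fintype p] [DecidableEq p] {A : Matrix m p R} {B : Matrix p m R}
    (hBA : B * A = 1) :
    LinearMap.ker (1 - A * B).mulVecLin = LinearMap.range A.mulVecLin := by
  apply le_antisymm
  · intro x hx
    refine ⟨B *ᵥ x, ?_⟩
    simpa [sub_mulVec, mulVec_mulVec, sub_eq_zero, eq_comm] using hx
  · have hA : (1 - A * B) * A = 0 := by
      rw [Matrix.sub_mul, Matrix.one_mul, Matrix.mul_assoc, hBA, Matrix.mul_one, sub_self]
    rintro _ ⟨v, rfl⟩
    change (1 - A * B) *ᵥ (A *ᵥ v) = 0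
    rw [mulVec_mulVec, hA, zero_mulVec]

theorem LinearMap.finrank_ker_add_finrank_map_of_ker_le {K V V₂ : Type*} [DivisionRing K]
    [AddCommGroup V] [Module K V] [AddCommGroup V₂] [Module K V₂] (f : V →ₗ[K] V₂)
    {S : Submodule K V} [FiniteDimensional K S] (h : LinearMap.ker f ≤ S) :
    finrank K (LinearMap.ker f) + finrank K (S.map f) = finrank K S := by
  have hker : finrank K (LinearMap.ker (f.domRestrict S)) = finrank K (LinearMap.ker f) := by
    rw [LinearMap.ker_domRestrict]
    exact (Submodule.comapSubtypeEquivOfLe h).finrank_eq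
  rw [← hker, ← LinearMap.range_domRestrict, add_comm]
  exact (f.domRestrict S).finrank_range_add_finrank_ker

theorem Matrix.rank_fromCols_eq_rank_add_rank_mul {K m n p : Type*} [Field K] [Fintype m]
    [Fintype n] [Fintype p] {W : Matrix m m K} {D : Matrix m p K}
    (hW : LinearMap.ker W.mulVecLin = LinearMap.range D.mulVecLin) (A : Matrix m n K) :
    (fromCols A D).rank = D.rank + (W * A).rank := by
  have hmap : (LinearMap.range (fromCols A D).mulVecLin).map W.mulVecLin
      = LinearMap.range (W * A).mulVecLin := by
    rw [range_mulVecLin_fromCols, Submodule.map_sup, ← hW, LinearMap.le_ker_iff_map.mp le_rfl,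
      sup_bot_eq, mulVecLin_mul, LinearMap.range_comp]
  have hker_le : LinearMap.ker W.mulVecLin ≤ LinearMap.range (fromCols A D).mulVecLin := by
    rw [hW, range_mulVecLin_fromCols]
    exact le_sup_right
  rw [rank, rank, rank, ← hmap, ← hW]
  exact (LinearMap.finrank_ker_add_finrank_map_of_ker_le _ hker_le).symm

theorem rank_decomposition_partialling_out_general
    (n N M : ℕ)
    (J G : Matrix (Fin n) (Fin N) ℝ) (D : Matrix (Fin n) (Fin M) ℝ)
    (hDD : IsUnit (Dᵀ * D))
    (W : Matrix (Fin n) (Fin n) ℝ)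
    (hW : W = 1 - D * (Dᵀ * D)⁻¹ * Dᵀ) :
    (Matrix.fromCols J (Matrix.fromCols G D)).rank
      = D.rank + (Matrix.fromCols (W * J) (W * G)).rank := by
  have hleft : (Dᵀ * D)⁻¹ * Dᵀ * D = 1 := by
    rw [Matrix.mul_assoc, nonsing_inv_mul _ ((isUnit_iff_isUnit_det _).mp hDD)]
  have hker : LinearMap.ker W.mulVecLin = LinearMap.range D.mulVecLin := by
    rw [hW, Matrix.mul_assoc D]
    exact ker_mulVecLin_one_sub_mul_eq_range hleft
  rw [rank_fromCols_assoc, rank_fromCols_eq_rank_add_rank_mul hker, mul_fromCols]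

/-- Rank decomposition under partialling out: rank([J, G, D]) = rank(D) + rank([WJ, WG]),
where W = 1 - D(DᵀD)⁻¹Dᵀ is the annihilator of D. -/
theorem rank_decomposition_partialling_out
    (n N M : ℕ) (hn : 0 < n) (hN : 0 < N) (hM : 0 < M)
    (J G : Matrix (Fin n) (Fin N) ℝ) (D : Matrix (Fin n) (Fin M) ℝ)
    (hDD : IsUnit (Dᵀ * D))
    (W : Matrix (Fin n) (Fin n) ℝ)
    (hW : W = 1 - D * (Dᵀ * D)⁻¹ * Dᵀ) :
    (Matrix.fromCols J (Matrix.fromCols G D)).rank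
      = D.rank + (Matrix.fromCols (W * J) (W * G)).rank :=
  rank_decomposition_partialling_out_general n N M J G D hDD W hW
end

section
/- Non-identification under homogeneous individual heterogeneity. Assume J.mulVec 1 = 1 and G.mulVec 1 = 1. Let μα = a • 1 for some a ∈ ℝ, let ρ ∈ ℝ, and let μγ ∈ ℝ^M. Then for every ρ̄ ∈ ℝ with ρ̄ ≠ −1 there exists μ̄α ∈ ℝ^N (namely μ̄α = ((1+ρ)·a/(1+ρ̄)) • 1) such that (J + ρ̄·G).mulVec μ̄α + D.mulVec μγ = (J + ρ·G).mulVec μα + D.mulVec μγ. In particular (J + ρ·G).mulVec (a • 1) = ((1+ρ)·a) • 1. -/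
open Matrix

lemma key_mulVec {n N : ℕ} (J G : Matrix (Fin n) (Fin N) ℝ)
    (hJ1 : J.mulVec 1 = 1) (hG1 : G.mulVec 1 = 1) (c r : ℝ) :
    (J + r • G).mulVec (c • (1 : Fin N → ℝ)) = ((1 + r) * c) • (1 : Fin n → ℝ) := by
  rw [add_mulVec, mulVec_smul, smul_mulVec, mulVec_smul, hJ1, hG1]
  ext i
  simp [Pi.add_apply, Pi.smul_apply]
  ring

/-- Non-identification under homogeneous individual heterogeneity: if μα = a•1 and the
rows of J and G sum to one, then any ρ̄ ≠ −1 reproduces the same mean outcome with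
μ̄α = ((1+ρ)a/(1+ρ̄))•1; in particular (J + ρG)(a•1) = ((1+ρ)a)•1. -/
theorem non_identification_homogeneous
    (n N M : ℕ) (hn : 0 < n) (hN : 0 < N) (hM : 0 < M)
    (J G : Matrix (Fin n) (Fin N) ℝ) (D : Matrix (Fin n) (Fin M) ℝ)
    (hJ1 : J.mulVec 1 = 1) (hG1 : G.mulVec 1 = 1)
    (a ρ : ℝ) (μα : Fin N → ℝ) (hμα : μα = a • (1 : Fin N → ℝ)) (μγ : Fin M → ℝ) :
    (∀ ρ' : ℝ, ρ' ≠ -1 → ∃ μα' : Fin N → ℝ,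
      μα' = ((1 + ρ) * a / (1 + ρ')) • (1 : Fin N → ℝ) ∧
      (J + ρ' • G).mulVec μα' + D.mulVec μγ
        = (J + ρ • G).mulVec μα + D.mulVec μγ) ∧
    (J + ρ • G).mulVec (a • (1 : Fin N → ℝ)) = ((1 + ρ) * a) • (1 : Fin n → ℝ) := by
  refine ⟨fun ρ' hρ' => ⟨((1 + ρ) * a / (1 + ρ')) • (1 : Fin N → ℝ), rfl, ?_⟩,
    key_mulVec J G hJ1 hG1 a ρ⟩
  have h1 : (1 : ℝ) + ρ' ≠ 0 := by
    intro h; apply hρ'; linarith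
  rw [hμα, key_mulVec J G hJ1 hG1 _ ρ', key_mulVec J G hJ1 hG1 a ρ]
  congr 1
  field_simp
end

section
/- Generic identification (containment and measure-zero version of Corollary 2). Assume Dᵀ*D is invertible. Let K ⊆ ℝ^N × ℝ^N be the set of pairs (v₁, v₂) with (W*J).mulVec v₁ + (W*G).mulVec v₂ = 0, and let U be the ℝ-linear span in ℝ^N of the set {v₁ : (v₁,v₂) ∈ K} ∪ {v₂ : (v₁,v₂) ∈ K}. Then the set S = {μα ∈ ℝ^N : ∃ (v₁,v₂) ∈ K, ∃ δ₁ δ₂ ∈ ℝ, δ₂ ≠ 0 ∧ δ₁ • v₁ + δ₂ • v₂ = μα} of mean-heterogeneity vectors for which the identification condition of Proposition 1 fails is contained in U; consequently, if U is a proper subspace of ℝ^N, then S has Lebesgue measure zero (with respect to the product Lebesgue measure on Fin N → ℝ). -/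
open Matrix MeasureTheory

/-- Generic identification (Corollary 2): the set S of mean-heterogeneity vectors μα for
which the identification condition of Proposition 1 fails is contained in the span U of
the null-space components of [WJ, WG]; hence if U is a proper subspace, S has Lebesgue
measure zero. -/
theorem generic_identification
    (n N M : ℕ) (hn : 0 < n) (hN : 0 < N) (hM : 0 < M)
    (J G : Matrix (Fin n) (Fin N) ℝ) (D : Matrix (Fin n) (Fin M) ℝ)
    (hDD : IsUnit (Dᵀ * D))
    (W : Matrix (Fin n) (Fin n) ℝ)
    (hW : W = 1 - D * (Dᵀ * D)⁻¹ * Dᵀ)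
    (K : Set ((Fin N → ℝ) × (Fin N → ℝ)))
    (hK : K = {v | (W * J).mulVec v.1 + (W * G).mulVec v.2 = 0})
    (U : Submodule ℝ (Fin N → ℝ))
    (hU : U = Submodule.span ℝ ((fun v : (Fin N → ℝ) × (Fin N → ℝ) => v.1) '' K
      ∪ (fun v : (Fin N → ℝ) × (Fin N → ℝ) => v.2) '' K))
    (S : Set (Fin N → ℝ))
    (hS : S = {μα | ∃ v ∈ K, ∃ δ₁ δ₂ : ℝ, δ₂ ≠ 0 ∧ δ₁ • v.1 + δ₂ • v.2 = μα}) :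
    S ⊆ (U : Set (Fin N → ℝ)) ∧ (U ≠ ⊤ → volume S = 0) := by
  have hsub : S ⊆ (U : Set (Fin N → ℝ)) := by
    rintro x hx
    rw [hS] at hx
    obtain ⟨v, hv, δ₁, δ₂, _, heq⟩ := hx
    have h1 : v.1 ∈ U := by
      rw [hU]
      exact Submodule.subset_span (Set.mem_union_left _ ⟨v, hv, rfl⟩)
    have h2 : v.2 ∈ U := by
      rw [hU]
      exact Submodule.subset_span (Set.mem_union_right _ ⟨v, hv, rfl⟩)
    rw [← heq]
    exact U.add_mem (U.smul_mem _ h1) (U.smul_mem _ h2)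
  refine ⟨hsub, fun hUtop => ?_⟩
  exact measure_mono_null hsub (Measure.addHaar_submodule volume U hUtop)
end

section
/- Example 1 (an identifying mobility pattern). Let y₁₁, y₁₂, y₂₁, y₂₂, μα₁, μα₂, μγ₁, ρ ∈ ℝ satisfy y₁₁ = μα₁ + ρ·μα₁ + μγ₁, y₂₁ = μα₂ + ρ·μα₂, y₁₂ = μα₁ + ρ·(μα₁ + μα₂)/2 + μγ₁, and y₂₂ = μα₂ + ρ·(μα₁ + μα₂)/2 + μγ₁. If μα₁ ≠ μα₂, then y₁₂ − y₂₂ = μα₁ − μα₂ ≠ 0 and ρ = 2·(y₁₁ − y₁₂)/(y₁₂ − y₂₂). -/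
/-- Example 1 (an identifying mobility pattern): in the two-individual, two-period,
linear-in-means system of expected outcomes, if μα₁ ≠ μα₂ then ρ is identified as
ρ = 2(y₁₁ − y₁₂)/(y₁₂ − y₂₂). -/
theorem example1_identifying_mobility
    (y₁₁ y₁₂ y₂₁ y₂₂ μα₁ μα₂ μγ₁ ρ : ℝ)
    (h11 : y₁₁ = μα₁ + ρ * μα₁ + μγ₁)
    (h21 : y₂₁ = μα₂ + ρ * μα₂)
    (h12 : y₁₂ = μα₁ + ρ * (μα₁ + μα₂) / 2 + μγ₁)
    (h22 : y₂₂ = μα₂ + ρ * (μα₁ + μα₂) / 2 + μγ₁)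
    (hne : μα₁ ≠ μα₂) :
    y₁₂ - y₂₂ = μα₁ - μα₂ ∧ y₁₂ - y₂₂ ≠ 0 ∧ ρ = 2 * (y₁₁ - y₁₂) / (y₁₂ - y₂₂) := by
  have hd : y₁₂ - y₂₂ = μα₁ - μα₂ := by rw [h12, h22]; ring
  have hsub : μα₁ - μα₂ ≠ 0 := sub_ne_zero.mpr hne
  refine ⟨hd, hd ▸ hsub, ?_⟩
  rw [hd, h11, h12]
  field_simp
  ring
end

section
/- Example 2 (a non-identifying mobility pattern). Let y₁₁, y₁₂, y₂₁, y₂₂, μα₁, μα₂, μγ₁, ρ ∈ ℝ satisfy y₁₁ = μα₁ + ρ·μα₁ + μγ₁, y₂₁ = μα₂ + ρ·μα₂, y₁₂ = μα₁ + ρ·μα₁, and y₂₂ = μα₂ + ρ·μα₂ + μγ₁. Then for every ρ̄ ∈ ℝ with ρ̄ ≠ −1 there exist μ̄α₁, μ̄α₂ ∈ ℝ (namely μ̄αᵢ = (1+ρ)·μαᵢ/(1+ρ̄)) such that y₁₁ = μ̄α₁ + ρ̄·μ̄α₁ + μγ₁, y₂₁ = μ̄α₂ + ρ̄·μ̄α₂,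 y₁₂ = μ̄α₁ + ρ̄·μ̄α₁, and y₂₂ = μ̄α₂ + ρ̄·μ̄α₂ + μγ₁. Hence ρ is not identified from this mobility pattern. -/
/-! The outcomes depend on `μαᵢ` and `ρ` only through the products `(1 + ρ) μαᵢ`, because each
individual is her own only peer; any `ρ̄ ≠ -1` reproduces them after rescaling `μαᵢ`. -/

theorem rescaled_add_mul_self_eq {K : Type*} [Field K] {ρ ρ' : K} (hρ' : 1 + ρ' ≠ 0) (μ : K) :
    (1 + ρ) * μ / (1 + ρ') + ρ' * ((1 + ρ) * μ / (1 + ρ')) = μ + ρ * μ := by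
  field_simp

/-- Example 2 (a non-identifying mobility pattern): in the group-swapping pattern, for any
ρ̄ ≠ −1 the alternative parameters μ̄αᵢ = (1+ρ)μαᵢ/(1+ρ̄) reproduce the same expected
outcomes, so ρ is not identified. -/
theorem example2_non_identifying_mobility
    (y₁₁ y₁₂ y₂₁ y₂₂ μα₁ μα₂ μγ₁ ρ : ℝ)
    (h11 : y₁₁ = μα₁ + ρ * μα₁ + μγ₁)
    (h21 : y₂₁ = μα₂ + ρ * μα₂)
    (h12 : y₁₂ = μα₁ + ρ * μα₁)
    (h22 : y₂₂ = μα₂ + ρ * μα₂ + μγ₁) :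
    ∀ ρ' : ℝ, ρ' ≠ -1 → ∃ μα₁' μα₂' : ℝ,
      μα₁' = (1 + ρ) * μα₁ / (1 + ρ') ∧ μα₂' = (1 + ρ) * μα₂ / (1 + ρ') ∧
      y₁₁ = μα₁' + ρ' * μα₁' + μγ₁ ∧
      y₂₁ = μα₂' + ρ' * μα₂' ∧
      y₁₂ = μα₁' + ρ' * μα₁' ∧
      y₂₂ = μα₂' + ρ' * μα₂' + μγ₁ := by
  intro ρ' hρ'
  have hne : 1 + ρ' ≠ 0 := fun h => hρ' (by linarith)
  refine ⟨_, _, rfl, rfl, ?_, ?_, ?_, ?_⟩ <;>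
    rw [rescaled_add_mul_self_eq hne] <;> assumption
end

section
/- Proposition 2 (identification with endogenous peer effects, sufficiency). Assume: for every t, (Gₜ).mulVec 1 = 1 (row sums one) and Gₜ i j = 0 whenever g i t ≠ g j t (no between-group links); |ψ| < 1, |ψ̄| < 1; for every t the matrices 1 − ψ·Gₜ and 1 − ψ̄·Gₜ are invertible; and for each t the structural mean equality (1 − ψ·Gₜ)⁻¹.mulVec ((1 + ρ·Gₜ).mulVec μα + Dₜ.mulVec μγ) = (1 − ψ̄·Gₜ)⁻¹.mulVec ((1 + ρ̄·Gₜ).mulVec μ̄α + Dₜ.mulVec μ̄γ) holds. Suppose further that ψ + ρ ≠ 0 and that there exist no vectors v₁, v₂, v₃ ∈ ℝ^N with (W*J).mulVec v₁ + (W*G).mulVec v₂ + (W*H).mulVec v₃ = 0 and scalars δ₁, δ₂, δ₃, δ₄ ∈ ℝ satisfying δ₁ • v₁ − v₂ = (δ₁ − δ₂) • μα, δ₃ • v₁ + v₃ = (δ₃ − δ₄) • μα, and (δ₁ ≠ δ₂ or δ₃ ≠ δ₄). Then ψ̄ = ψ and ρ̄ = ρ. -/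
open Matrix

/-- Proposition 2 (identification with endogenous peer effects, sufficiency).
Individuals i ∈ Fin N are assigned to groups g i t ∈ Fin M in each period t ∈ Fin T;
Gm t is the period-t network, with square Hm t = Gm t * Gm t; C t is the group-indicator
matrix and Dm t its first M−1 columns (normalization γ_M = 0). J, Gs, Hs, Ds are the
stacked (over periods) versions, and W annihilates the stacked group dummies Ds.
If the structural means coincide, ψ + ρ ≠ 0, and the null-space condition on
[WJ, WGs, WHs] holds, then ψ and ρ are identified. -/
theorem proposition2_endogenous_effects
    (N T M : ℕ) (hN : 0 < N) (hT : 0 < T) (hM : 2 ≤ M)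
    (g : Fin N → Fin T → Fin M)
    (Gm : Fin T → Matrix (Fin N) (Fin N) ℝ)
    (C : Fin T → Matrix (Fin N) (Fin M) ℝ)
    (hC : ∀ t i m, C t i m = if g i t = m then 1 else 0)
    (Dm : Fin T → Matrix (Fin N) (Fin (M - 1)) ℝ)
    (hDm : ∀ t i m, Dm t i m = C t i (Fin.castLE (Nat.sub_le M 1) m))
    (J : Matrix (Fin T × Fin N) (Fin N) ℝ)
    (hJ : ∀ p j, J p j = (1 : Matrix (Fin N) (Fin N) ℝ) p.2 j)
    (Gs : Matrix (Fin T × Fin N) (Fin N) ℝ)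
    (hGs : ∀ p j, Gs p j = Gm p.1 p.2 j)
    (Hs : Matrix (Fin T × Fin N) (Fin N) ℝ)
    (hHs : ∀ p j, Hs p j = (Gm p.1 * Gm p.1) p.2 j)
    (Ds : Matrix (Fin T × Fin N) (Fin (M - 1)) ℝ)
    (hDsdef : ∀ p m, Ds p m = Dm p.1 p.2 m)
    (hDD : IsUnit (Dsᵀ * Ds))
    (W : Matrix (Fin T × Fin N) (Fin T × Fin N) ℝ)
    (hW : W = 1 - Ds * (Dsᵀ * Ds)⁻¹ * Dsᵀ)
    (ψ ψ' ρ ρ' : ℝ) (μα μα' : Fin N → ℝ) (μγ μγ' : Fin (M - 1) → ℝ)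
    (hrow : ∀ t, (Gm t).mulVec 1 = 1)
    (hgroup : ∀ t i j, g i t ≠ g j t → Gm t i j = 0)
    (hψ : |ψ| < 1) (hψ' : |ψ'| < 1)
    (hinv : ∀ t, IsUnit (1 - ψ • Gm t))
    (hinv' : ∀ t, IsUnit (1 - ψ' • Gm t))
    (hmean : ∀ t, (1 - ψ • Gm t)⁻¹.mulVec
        ((1 + ρ • Gm t).mulVec μα + (Dm t).mulVec μγ)
      = (1 - ψ' • Gm t)⁻¹.mulVec
        ((1 + ρ' • Gm t).mulVec μα' + (Dm t).mulVec μγ'))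
    (hsum : ψ + ρ ≠ 0)
    (hid : ¬ ∃ (v₁ v₂ v₃ : Fin N → ℝ) (δ₁ δ₂ δ₃ δ₄ : ℝ),
      (W * J).mulVec v₁ + (W * Gs).mulVec v₂ + (W * Hs).mulVec v₃ = 0 ∧
      δ₁ • v₁ - v₂ = (δ₁ - δ₂) • μα ∧
      δ₃ • v₁ + v₃ = (δ₃ - δ₄) • μα ∧
      (δ₁ ≠ δ₂ ∨ δ₃ ≠ δ₄)) :
    ψ' = ψ ∧ ρ' = ρ := by
  -- Step 1: within-group row sums give  Gₜ Dₜ = Dₜ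
  have hGD : ∀ t, Gm t * Dm t = Dm t := by
    intro t
    ext i m
    rw [Matrix.mul_apply, hDm, hC]
    by_cases h : g i t = Fin.castLE (Nat.sub_le M 1) m
    · rw [if_pos h]
      have h2 : ∀ j, Gm t i j * Dm t j m = Gm t i j := by
        intro j
        rw [hDm, hC]
        by_cases hj : g j t = Fin.castLE (Nat.sub_le M 1) m
        · rw [if_pos hj, mul_one]
        · rw [if_neg hj, mul_zero,
            hgroup t i j (by rw [h]; exact fun hc => hj hc.symm)]
      rw [Finset.sum_congr rfl fun j _ => h2 j]
      have := congrFun (hrow t) i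
      simpa [Matrix.mulVec, dotProduct] using this
    · rw [if_neg h]
      apply Finset.sum_eq_zero
      intro j _
      rw [hDm, hC]
      by_cases hj : g j t = Fin.castLE (Nat.sub_le M 1) m
      · rw [hgroup t i j (by rw [hj]; exact fun hc => h hc), zero_mul]
      · rw [if_neg hj, mul_zero]
  -- Step 2: cross-multiplied mean equality
  have key : ∀ t, (1 - ψ' • Gm t).mulVec ((1 + ρ • Gm t).mulVec μα + (Dm t).mulVec μγ)
      = (1 - ψ • Gm t).mulVec ((1 + ρ' • Gm t).mulVec μα' + (Dm t).mulVec μγ') := by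
    intro t
    have hdA : IsUnit (1 - ψ • Gm t).det := (Matrix.isUnit_iff_isUnit_det _).mp (hinv t)
    have hdB : IsUnit (1 - ψ' • Gm t).det := (Matrix.isUnit_iff_isUnit_det _).mp (hinv' t)
    have hc : (1 - ψ • Gm t) * (1 - ψ' • Gm t) = (1 - ψ' • Gm t) * (1 - ψ • Gm t) := by
      simp only [sub_mul, mul_sub, mul_one, one_mul, Matrix.smul_mul, Matrix.mul_smul,
        smul_smul, mul_comm ψ ψ']
      abel
    calc (1 - ψ' • Gm t).mulVec ((1 + ρ • Gm t).mulVec μα + (Dm t).mulVec μγ)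
        = ((1 - ψ' • Gm t) * ((1 - ψ • Gm t) * (1 - ψ • Gm t)⁻¹)).mulVec
            ((1 + ρ • Gm t).mulVec μα + (Dm t).mulVec μγ) := by
          rw [Matrix.mul_nonsing_inv _ hdA, mul_one]
      _ = (1 - ψ' • Gm t).mulVec ((1 - ψ • Gm t).mulVec ((1 - ψ • Gm t)⁻¹.mulVec
            ((1 + ρ • Gm t).mulVec μα + (Dm t).mulVec μγ))) := by
          rw [Matrix.mulVec_mulVec, Matrix.mulVec_mulVec, mul_assoc]
      _ = (1 - ψ' • Gm t).mulVec ((1 - ψ • Gm t).mulVec ((1 - ψ' • Gm t)⁻¹.mulVec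
            ((1 + ρ' • Gm t).mulVec μα' + (Dm t).mulVec μγ'))) := by rw [hmean t]
      _ = (((1 - ψ' • Gm t) * (1 - ψ • Gm t)) * (1 - ψ' • Gm t)⁻¹).mulVec
            ((1 + ρ' • Gm t).mulVec μα' + (Dm t).mulVec μγ') := by
          rw [Matrix.mulVec_mulVec, Matrix.mulVec_mulVec]
      _ = (((1 - ψ • Gm t) * (1 - ψ' • Gm t)) * (1 - ψ' • Gm t)⁻¹).mulVec
            ((1 + ρ' • Gm t).mulVec μα' + (Dm t).mulVec μγ') := by rw [hc]
      _ = (1 - ψ • Gm t).mulVec ((1 + ρ' • Gm t).mulVec μα' + (Dm t).mulVec μγ') := by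
          rw [mul_assoc, Matrix.mul_nonsing_inv _ hdB, mul_one]
  -- Step 3: period-by-period linear restriction
  have per : ∀ t, (μα - μα') + (Gm t).mulVec ((ρ - ψ') • μα - (ρ' - ψ) • μα')
      + (Gm t * Gm t).mulVec ((ψ * ρ') • μα' - (ψ' * ρ) • μα)
      + (Dm t).mulVec ((1 - ψ') • μγ - (1 - ψ) • μγ') = 0 := by
    intro t
    have hz := sub_eq_zero_of_eq (key t)
    calc (μα - μα') + (Gm t).mulVec ((ρ - ψ') • μα - (ρ' - ψ) • μα')
        + (Gm t * Gm t).mulVec ((ψ * ρ') • μα' - (ψ' * ρ) • μα)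
        + (Dm t).mulVec ((1 - ψ') • μγ - (1 - ψ) • μγ')
        = (1 - ψ' • Gm t).mulVec ((1 + ρ • Gm t).mulVec μα + (Dm t).mulVec μγ)
          - (1 - ψ • Gm t).mulVec ((1 + ρ' • Gm t).mulVec μα' + (Dm t).mulVec μγ') := by
          simp only [Matrix.mulVec_add, Matrix.mulVec_sub, Matrix.mulVec_smul,
            Matrix.add_mulVec, Matrix.sub_mulVec, Matrix.smul_mulVec,
            Matrix.one_mulVec, Matrix.mulVec_mulVec, hGD, mul_add, add_mul, mul_sub, sub_mul,
            mul_one, one_mul, Matrix.smul_mul, Matrix.mul_smul, smul_smul, Matrix.sub_mul,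
            Matrix.mul_sub, Matrix.add_mul, Matrix.mul_add, Matrix.one_mul, Matrix.mul_one]
          module
      _ = 0 := hz
  -- Step 4: stacked restriction
  have stack : J.mulVec (μα - μα') + Gs.mulVec ((ρ - ψ') • μα - (ρ' - ψ) • μα')
      + Hs.mulVec ((ψ * ρ') • μα' - (ψ' * ρ) • μα)
      + Ds.mulVec ((1 - ψ') • μγ - (1 - ψ) • μγ') = 0 := by
    funext p
    have h := congrFun (per p.1) p.2
    simp only [Pi.add_apply, Pi.zero_apply] at h ⊢
    have hJ' : J.mulVec (μα - μα') p = (μα - μα') p.2 := by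
      simp [Matrix.mulVec, dotProduct, hJ, Matrix.one_apply]
    have hG' : Gs.mulVec ((ρ - ψ') • μα - (ρ' - ψ) • μα') p
        = (Gm p.1).mulVec ((ρ - ψ') • μα - (ρ' - ψ) • μα') p.2 := by
      simp [Matrix.mulVec, dotProduct, hGs]
    have hH' : Hs.mulVec ((ψ * ρ') • μα' - (ψ' * ρ) • μα) p
        = (Gm p.1 * Gm p.1).mulVec ((ψ * ρ') • μα' - (ψ' * ρ) • μα) p.2 := by
      simp [Matrix.mulVec, dotProduct, hHs]
    have hD' : Ds.mulVec ((1 - ψ') • μγ - (1 - ψ) • μγ') p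
        = (Dm p.1).mulVec ((1 - ψ') • μγ - (1 - ψ) • μγ') p.2 := by
      simp [Matrix.mulVec, dotProduct, hDsdef]
    rw [hJ', hG', hH', hD']
    exact h
  -- Step 5: W annihilates Ds
  have hWDs : W * Ds = 0 := by
    have hdet : IsUnit (Dsᵀ * Ds).det := (Matrix.isUnit_iff_isUnit_det _).mp hDD
    rw [hW, Matrix.sub_mul, Matrix.one_mul, Matrix.mul_assoc, Matrix.mul_assoc,
      Matrix.nonsing_inv_mul _ hdet, Matrix.mul_one, sub_self]
  -- Step 6: projected stacked restriction
  have hfin : (W * J).mulVec (μα - μα')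
      + (W * Gs).mulVec ((ρ - ψ') • μα - (ρ' - ψ) • μα')
      + (W * Hs).mulVec ((ψ * ρ') • μα' - (ψ' * ρ) • μα) = 0 := by
    have h0 : W.mulVec (J.mulVec (μα - μα') + Gs.mulVec ((ρ - ψ') • μα - (ρ' - ψ) • μα')
        + Hs.mulVec ((ψ * ρ') • μα' - (ψ' * ρ) • μα)
        + Ds.mulVec ((1 - ψ') • μγ - (1 - ψ) • μγ')) = 0 := by
      rw [stack, Matrix.mulVec_zero]
    rw [Matrix.mulVec_add, Matrix.mulVec_add, Matrix.mulVec_add, Matrix.mulVec_mulVec,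
      Matrix.mulVec_mulVec, Matrix.mulVec_mulVec, Matrix.mulVec_mulVec, hWDs,
      Matrix.zero_mulVec, add_zero] at h0
    exact h0
  -- Step 7: apply the identification condition
  have hδ : ρ' - ψ = ρ - ψ' ∧ ψ * ρ' = ψ' * ρ := by
    by_contra hcon
    apply hid
    refine ⟨μα - μα', (ρ - ψ') • μα - (ρ' - ψ) • μα', (ψ * ρ') • μα' - (ψ' * ρ) • μα,
      ρ' - ψ, ρ - ψ', ψ * ρ', ψ' * ρ, hfin, ?_, ?_, ?_⟩
    · module
    · module
    · rcases not_and_or.mp hcon with h | h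
      · exact Or.inl h
      · exact Or.inr h
  -- Step 8: conclude
  obtain ⟨h1, h2⟩ := hδ
  have hs : ψ' + ρ' = ψ + ρ := by linarith
  have hz : (ψ' - ψ) * (ψ + ρ) = 0 := by linear_combination ψ * hs - h2
  have hψeq : ψ' = ψ := by
    rcases mul_eq_zero.mp hz with h | h
    · linarith [sub_eq_zero.mp h]
    · exact absurd h hsum
  exact ⟨hψeq, by linarith⟩
end

section
/- Reduced-form peer effect under linear-in-means. Let Ḡ : Matrix (Fin N) (Fin N) ℝ satisfy Ḡ * Ḡ = Ḡ, and let ψ, ρ ∈ ℝ with ψ ≠ 1. Then (1 + (ψ/(1−ψ))·Ḡ) * (1 + ρ·Ḡ) = 1 + ((ψ + ρ)/(1−ψ))·Ḡ. Consequently, since (1 − ψḠ)⁻¹ = 1 + (ψ/(1−ψ))Ḡ, the reduced-form mean (1 − ψḠ)⁻¹(1 + ρḠ)μα equals (1 + ((ψ+ρ)/(1−ψ))Ḡ)μα for every μα ∈ ℝ^N, so only the composite parameter (ψ+ρ)/(1−ψ) enters the reduced-form mean under the linear-in-means network. -/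
open Matrix

/-- Reduced-form peer effect under linear-in-means: for idempotent Ḡ and ψ ≠ 1,
(1 + (ψ/(1−ψ))Ḡ)(1 + ρḠ) = 1 + ((ψ+ρ)/(1−ψ))Ḡ, so the reduced-form mean
(1 − ψḠ)⁻¹(1 + ρḠ)μα depends only on the composite parameter (ψ+ρ)/(1−ψ). -/
theorem reduced_form_linear_in_means
    (N : ℕ) (Gbar : Matrix (Fin N) (Fin N) ℝ) (hG : Gbar * Gbar = Gbar)
    (ψ ρ : ℝ) (hψ : ψ ≠ 1) :
    (1 + (ψ / (1 - ψ)) • Gbar) * (1 + ρ • Gbar)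
      = 1 + ((ψ + ρ) / (1 - ψ)) • Gbar ∧
    ∀ μα : Fin N → ℝ,
      (1 + (ψ / (1 - ψ)) • Gbar).mulVec ((1 + ρ • Gbar).mulVec μα)
        = (1 + ((ψ + ρ) / (1 - ψ)) • Gbar).mulVec μα := by
  have h1 : (1 : ℝ) - ψ ≠ 0 := sub_ne_zero.mpr (Ne.symm hψ)
  have key : (1 + (ψ / (1 - ψ)) • Gbar) * (1 + ρ • Gbar)
      = 1 + ((ψ + ρ) / (1 - ψ)) • Gbar := by
    rw [mul_add, add_mul, add_mul, mul_one, one_mul, smul_mul_smul_comm, hG]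
    rw [mul_one, add_assoc, ← add_smul, ← add_smul]
    congr 2
    field_simp
    ring
  refine ⟨key, fun μα => ?_⟩
  rw [mulVec_mulVec, key]
end

section
/- Proposition 3 (identification via conditional variance restrictions for the linear-in-means network, homoskedastic errors). Let J, G : Matrix (Fin n) (Fin N) ℝ, W, F : Matrix (Fin n) (Fin n) ℝ, and reals ψ, ψ̄, ρ, ρ̄, σ², σ̄², s, s̄ with |ψ| < 1, |ψ̄| < 1, σ² ≠ 0 and s ≠ 0. Write κ = (ψ+ρ)/(1−ψ), κ̄ = (ψ̄+ρ̄)/(1−ψ̄), τ = ψ(2−ψ)/(1−ψ)², τ̄ = ψ̄(2−ψ̄)/(1−ψ̄)². Assume the variance equality σ²·(W*J*Jᵀ*W) + (σ²·κ)·(W*(J*Gᵀ + G*Jᵀ)*W) + (σ²·κ²)·(W*G*Gᵀ*W) + s·W + (s·τ)·(W*F*W) = σ̄²·(W*J*Jᵀ*W) + (σ̄²·κ̄)·(W*(J*Gᵀ + G*Jᵀ)*W) + (σ̄²·κ̄²)·(W*G*Gᵀ*W) + s̄·W + (s̄·τ̄)·(W*F*W), and assume the five matrices W, W*J*Jᵀ*W,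 W*(J*Gᵀ + G*Jᵀ)*W, W*G*Gᵀ*W and W*F*W are linearly independent (any real linear combination of them equal to the zero matrix has all five coefficients zero). Then σ̄² = σ², s̄ = s, ψ̄ = ψ and ρ̄ = ρ. -/
open Matrix

/-- Proposition 3 (identification via conditional variance restrictions for the
linear-in-means network, homoskedastic errors): equality of the two five-term variance
expressions, together with linear independence of W, WJJᵀW, W(JGᵀ+GJᵀ)W, WGGᵀW and WFW,
identifies σ², s, ψ and ρ. -/
theorem proposition3_variance_identification
    (n N : ℕ) (J G : Matrix (Fin n) (Fin N) ℝ) (W F : Matrix (Fin n) (Fin n) ℝ)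
    (ψ ψ' ρ ρ' σsq σsq' s s' : ℝ)
    (hψ : |ψ| < 1) (hψ' : |ψ'| < 1) (hσ : σsq ≠ 0) (hs : s ≠ 0)
    (hvar :
      σsq • (W * J * Jᵀ * W)
        + (σsq * ((ψ + ρ) / (1 - ψ))) • (W * (J * Gᵀ + G * Jᵀ) * W)
        + (σsq * ((ψ + ρ) / (1 - ψ)) ^ 2) • (W * G * Gᵀ * W)
        + s • W
        + (s * (ψ * (2 - ψ) / (1 - ψ) ^ 2)) • (W * F * W)
      = σsq' • (W * J * Jᵀ * W)
        + (σsq' * ((ψ' + ρ') / (1 - ψ'))) • (W * (J * Gᵀ + G * Jᵀ) * W)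
        + (σsq' * ((ψ' + ρ') / (1 - ψ')) ^ 2) • (W * G * Gᵀ * W)
        + s' • W
        + (s' * (ψ' * (2 - ψ') / (1 - ψ') ^ 2)) • (W * F * W))
    (hlin : ∀ c₁ c₂ c₃ c₄ c₅ : ℝ,
      c₁ • W + c₂ • (W * J * Jᵀ * W) + c₃ • (W * (J * Gᵀ + G * Jᵀ) * W)
        + c₄ • (W * G * Gᵀ * W) + c₅ • (W * F * W) = 0 →
      c₁ = 0 ∧ c₂ = 0 ∧ c₃ = 0 ∧ c₄ = 0 ∧ c₅ = 0) :
    σsq' = σsq ∧ s' = s ∧ ψ' = ψ ∧ ρ' = ρ := by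
  have h1ψ : (0:ℝ) < 1 - ψ := by cases abs_lt.mp hψ; linarith
  have h1ψ' : (0:ℝ) < 1 - ψ' := by cases abs_lt.mp hψ'; linarith
  have key := hlin (s - s') (σsq - σsq')
      (σsq * ((ψ + ρ) / (1 - ψ)) - σsq' * ((ψ' + ρ') / (1 - ψ')))
      (σsq * ((ψ + ρ) / (1 - ψ)) ^ 2 - σsq' * ((ψ' + ρ') / (1 - ψ')) ^ 2)
      (s * (ψ * (2 - ψ) / (1 - ψ) ^ 2) - s' * (ψ' * (2 - ψ') / (1 - ψ') ^ 2))
      (by linear_combination (norm := module) hvar)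
  obtain ⟨h1, h2, h3, h4, h5⟩ := key
  have hσeq : σsq' = σsq := by linarith
  have hseq : s' = s := by linarith
  subst hσeq hseq
  have hκ : (ψ + ρ) / (1 - ψ) = (ψ' + ρ') / (1 - ψ') := by
    have := sub_eq_zero.mp h3
    exact mul_left_cancel₀ hσ this
  have hτ : ψ * (2 - ψ) / (1 - ψ) ^ 2 = ψ' * (2 - ψ') / (1 - ψ') ^ 2 := by
    have := sub_eq_zero.mp h5
    exact mul_left_cancel₀ hs this
  have hψeq : ψ' = ψ := by
    have h := hτ
    field_simp at h
    nlinarith [sq_nonneg (ψ - ψ'), sq_nonneg ((1-ψ)*(1-ψ')), mul_pos h1ψ h1ψ']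
  subst hψeq
  refine ⟨rfl, rfl, rfl, ?_⟩
  have := hκ
  field_simp at this
  linarith
end

section
/- Algebraic step of Proposition 3. Let ψ, ψ̄, ρ, ρ̄ ∈ ℝ with |ψ| < 1 and |ψ̄| < 1. If (ψ+ρ)/(1−ψ) = (ψ̄+ρ̄)/(1−ψ̄) and ψ·(2−ψ)/(1−ψ)² = ψ̄·(2−ψ̄)/(1−ψ̄)², then ψ̄ = ψ and ρ̄ = ρ. -/
/-! Since `ψ (2 - ψ) = 1 - (1 - ψ)²`, the variance coefficient equals `1 / (1 - ψ)² - 1`, so the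
second equation says `(1 - ψ)² = (1 - ψ̄)²`; for `ψ, ψ̄ < 1` both bases are positive, hence `ψ̄ = ψ`.
The first equation then has equal denominators and gives `ρ̄ = ρ`. -/

lemma mul_two_sub_div_one_sub_sq {x : ℝ} (hx : x ≠ 1) :
    x * (2 - x) / (1 - x) ^ 2 = ((1 - x) ^ 2)⁻¹ - 1 := by
  have : (1 - x) ^ 2 ≠ 0 := pow_ne_zero 2 (sub_ne_zero.mpr hx.symm)
  field_simp
  ring

lemma eq_of_mul_two_sub_div_one_sub_sq_eq {x y : ℝ} (hx : x < 1) (hy : y < 1)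
    (h : x * (2 - x) / (1 - x) ^ 2 = y * (2 - y) / (1 - y) ^ 2) : x = y := by
  rw [mul_two_sub_div_one_sub_sq hx.ne, mul_two_sub_div_one_sub_sq hy.ne, sub_left_inj,
    inv_inj, pow_left_inj₀ (by linarith) (by linarith) two_ne_zero] at h
  linarith

/-- Algebraic step of Proposition 3: matching (ψ+ρ)/(1−ψ) and ψ(2−ψ)/(1−ψ)² with
|ψ| < 1 and |ψ̄| < 1 forces ψ̄ = ψ and ρ̄ = ρ. -/
theorem proposition3_algebraic_step
    (ψ ψ' ρ ρ' : ℝ) (hψ : |ψ| < 1) (hψ' : |ψ'| < 1)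
    (h1 : (ψ + ρ) / (1 - ψ) = (ψ' + ρ') / (1 - ψ'))
    (h2 : ψ * (2 - ψ) / (1 - ψ) ^ 2 = ψ' * (2 - ψ') / (1 - ψ') ^ 2) :
    ψ' = ψ ∧ ρ' = ρ := by
  have hψ_lt : ψ < 1 := (abs_lt.mp hψ).2
  obtain rfl : ψ' = ψ :=
    (eq_of_mul_two_sub_div_one_sub_sq_eq hψ_lt (abs_lt.mp hψ').2 h2).symm
  rw [div_left_inj' (sub_ne_zero.mpr hψ_lt.ne')] at h1
  exact ⟨rfl, by linarith⟩
end

section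
/- Core step of Proposition 4 (identification with a general network from between-group covariance restrictions). Let A₁, …, A₆ be real matrices of a common size, and let ψ, ψ̄, ρ, ρ̄, σ², σ̄² ∈ ℝ satisfy (σ² − σ̄²)·A₁ + (σ²·(ρ − ψ̄) − σ̄²·(ρ̄ − ψ))·A₂ + (σ̄²·ψ·ρ̄ − σ²·ψ̄·ρ)·A₃ + (σ̄²·(ρ̄ − ψ)·ψ·ρ̄ − σ²·(ρ − ψ̄)·ψ̄·ρ)·A₄ + (σ²·(ρ − ψ̄)² − σ̄²·(ρ̄ − ψ)²)·A₅ + (σ²·ψ̄²·ρ² − σ̄²·ψ²·ρ̄²)·A₆ = 0. Assume A₁, A₂ and A₃ are each maximally linearly independent of A₁, …, A₆, that σ² ≠ 0, and that ψ + ρ ≠ 0. Then σ̄² = σ², ψ̄ = ψ and ρ̄ = ρ. -/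
open Matrix

/-- Core step of Proposition 4 (identification with a general network from between-group
covariance restrictions): if the displayed linear combination of the between-group
variance blocks A₁, …, A₆ vanishes, A₁, A₂, A₃ are each maximally linearly independent of
A₁, …, A₆, σ² ≠ 0 and ψ + ρ ≠ 0, then σ̄² = σ², ψ̄ = ψ and ρ̄ = ρ. -/
theorem proposition4_core_step
    (p q : ℕ) (A₁ A₂ A₃ A₄ A₅ A₆ : Matrix (Fin p) (Fin q) ℝ)
    (ψ ψ' ρ ρ' σsq σsq' : ℝ)
    (heq : (σsq - σsq') • A₁
        + (σsq * (ρ - ψ') - σsq' * (ρ' - ψ)) • A₂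
        + (σsq' * ψ * ρ' - σsq * ψ' * ρ) • A₃
        + (σsq' * (ρ' - ψ) * ψ * ρ' - σsq * (ρ - ψ') * ψ' * ρ) • A₄
        + (σsq * (ρ - ψ') ^ 2 - σsq' * (ρ' - ψ) ^ 2) • A₅
        + (σsq * ψ' ^ 2 * ρ ^ 2 - σsq' * ψ ^ 2 * ρ' ^ 2) • A₆ = 0)
    (hmax1 : ∀ l₁ l₂ l₃ l₄ l₅ l₆ : ℝ,
      l₁ • A₁ + l₂ • A₂ + l₃ • A₃ + l₄ • A₄ + l₅ • A₅ + l₆ • A₆ = 0 → l₁ = 0)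
    (hmax2 : ∀ l₁ l₂ l₃ l₄ l₅ l₆ : ℝ,
      l₁ • A₁ + l₂ • A₂ + l₃ • A₃ + l₄ • A₄ + l₅ • A₅ + l₆ • A₆ = 0 → l₂ = 0)
    (hmax3 : ∀ l₁ l₂ l₃ l₄ l₅ l₆ : ℝ,
      l₁ • A₁ + l₂ • A₂ + l₃ • A₃ + l₄ • A₄ + l₅ • A₅ + l₆ • A₆ = 0 → l₃ = 0)
    (hσ : σsq ≠ 0) (hsum : ψ + ρ ≠ 0) :
    σsq' = σsq ∧ ψ' = ψ ∧ ρ' = ρ := by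
  have h1 := hmax1 _ _ _ _ _ _ heq
  have h2 := hmax2 _ _ _ _ _ _ heq
  have h3 := hmax3 _ _ _ _ _ _ heq
  have hσ' : σsq' = σsq := by linarith
  have e2 : ρ - ψ' = ρ' - ψ :=
    mul_left_cancel₀ hσ (by rw [hσ'] at h2; linarith)
  have e3 : ψ * ρ' = ψ' * ρ :=
    mul_left_cancel₀ hσ (by rw [hσ'] at h3; linarith)
  have hψ : ψ' = ψ := (mul_left_cancel₀ hsum (by linear_combination ψ * e2 + e3)).symm
  exact ⟨hσ', hψ, by linarith⟩
end
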